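/- Let G be an α_i-metric graph, x,y mutually distant vertices, c a middle vertex of a shortest (x,y)-path, and T a breadth-first-search (shortest-path) spanning tree of G rooted at c. Then every vertex v satisfies e_G(v) ≤ e_T(v) ≤ e_G(v) + 4i+3, where e_T denotes eccentricity in the tree T. -/

import Mathlib

/-
Write `a = d(x,c)` and `b = d(y,c)`. The heart of the matter is that every vertex `u` satisfies
`d(u,c) + a ≤ d(u,x) + 2i+1` or `d(u,c) + b ≤ d(u,y) + 2i+1`. On a geodesic from `u` to `c`
pick a vertex `w` at the same levels as `c` (the same distances to `x` and `y`) whose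
predecessor (towards `u`) is not, or `w = u`; the `α_i` condition at that step gives
`d(u,w) + a ≤ d(u,x) + i` or its `y`-analogue. Let `σ` be the neighbour of `c` towards `x`. If
`σ ∈ I(u,c)` the `α_i` condition at `σ c` already concludes. Otherwise either `c ∈ I(w,σ)`, and
`α_i` bounds `d(w,c) ≤ i`, or a geodesic from `w` to `σ` has length `d(w,c)`; along it the
distance to `y` must first exceed `b` and later the distance to `x` drop below `a`, and `α_i`
applied at these two steps gives `d(u,c) + a ≤ d(u,x) + 2i+1`.

For the tree, `d_T(v,u) ≤ d(v,c) + d(c,u)`, and the inequality above bounds `d(v,c)` by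
`e(v) - min(a,b) + 2i+1` and, since `e(x) = e(y) = a + b`, `d(u,c)` by `max(a,b) + 2i+1`;
finally `max(a,b) - min(a,b) ≤ 1` as `c` is a middle vertex.
-/

open SimpleGraph

variable {V : Type*}

/-- `Itv G u v x` means `x` lies on a shortest `(u,v)`-path, i.e. `x ∈ I(u,v)`. -/
def Itv (G : SimpleGraph V) (u v x : V) : Prop :=
  G.dist u x + G.dist x v = G.dist u v

/-- `G` is an `α_i`-metric graph. -/
def AlphaI (G : SimpleGraph V) (i : ℕ) : Prop :=
  ∀ u v w x : V, Itv G u w v → Itv G v x w → G.Adj v w →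
    G.dist u v + G.dist v x ≤ G.dist u x + i

/-- Eccentricity of a vertex. -/
noncomputable def ecc (G : SimpleGraph V) [Fintype V] (v : V) : ℕ :=
  Finset.univ.sup (fun u => G.dist v u)

/-- Radius of the graph. -/
noncomputable def grad (G : SimpleGraph V) [Fintype V] [Nonempty V] : ℕ :=
  Finset.univ.inf' Finset.univ_nonempty (fun v => ecc G v)

/-- Diameter of the graph. -/
noncomputable def gdiam (G : SimpleGraph V) [Fintype V] : ℕ :=
  Finset.univ.sup (fun v => ecc G v)

theorem Nat.exists_le_lt_and_not_succ {P : ℕ → Prop} {k n : ℕ} (hkn : k ≤ n) (hk : P k)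
    (hn : ¬ P n) : ∃ m, k ≤ m ∧ m < n ∧ P m ∧ ¬ P (m + 1) := by
  induction n, hkn using Nat.le_induction with
  | base => exact absurd hk hn
  | succ n hkn ih =>
    by_cases hPn : P n
    · exact ⟨n, hkn, n.lt_succ_self, hPn, hn⟩
    · obtain ⟨m, hkm, hmn, hm⟩ := ih hPn
      exact ⟨m, hkm, hmn.trans n.lt_succ_self, hm⟩

namespace SimpleGraph

variable {G : SimpleGraph V}

theorem Walk.dist_getVert_of_length_eq_dist {u v : V} (p : G.Walk u v)
    (hp : p.length = G.dist u v) {n : ℕ} (hn : n ≤ p.length) :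
    G.dist u (p.getVert n) = n ∧ G.dist (p.getVert n) v = p.length - n := by
  have htake := length_eq_dist_of_subwalk hp (p.isSubwalk_take n)
  have hdrop := length_eq_dist_of_subwalk hp (p.isSubwalk_drop n)
  rw [Walk.take_length, min_eq_left hn] at htake
  rw [Walk.drop_length] at hdrop
  exact ⟨htake.symm, hdrop.symm⟩

end SimpleGraph

theorem dist_le_ecc [Fintype V] (G : SimpleGraph V) (v u : V) : G.dist v u ≤ ecc G v :=
  Finset.le_sup (f := fun u => G.dist v u) (Finset.mem_univ u)

namespace AlphaI

variable {G : SimpleGraph V} {i : ℕ}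

theorem dist_add_dist_le_of_adj (hα : AlphaI G i) {u v w x : V} (hvw : G.Adj v w)
    (hu : G.dist u w = G.dist u v + 1) (hx : G.dist x v = G.dist x w + 1) :
    G.dist u v + G.dist x v ≤ G.dist u x + i := by
  have hvw' : G.dist v w = 1 := dist_eq_one_iff_adj.mpr hvw
  have hxv : G.dist v x = G.dist x v := dist_comm
  have hxw : G.dist w x = G.dist x w := dist_comm
  have := hα u v w x (by unfold Itv; omega) (by unfold Itv; omega) hvw
  omega

theorem dist_add_le_of_geodesic_crossing_levels (hG : G.Connected) (hα : AlphaI G i)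
    {x y u w σ : V} {a b : ℕ} (hxy : G.dist x y = a + b) (hxw : G.dist x w = a)
    (hyw : G.dist y w = b) (hxσ : G.dist x σ < a) (hyσ : G.dist y σ = b + 1)
    (huσ : G.dist u w + G.dist w σ ≤ G.dist u σ) :
    G.dist u w + G.dist w σ + a ≤ G.dist u x + 2 * i + 1 := by
  obtain ⟨g, hg⟩ := hG.exists_walk_length_eq_dist w σ
  set D := G.dist w σ
  have hσg : ∀ m ≤ D, G.dist σ (g.getVert m) = D - m := fun m hm => by
    rw [dist_comm, (g.dist_getVert_of_length_eq_dist hg (hg ▸ hm)).2, hg]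
  have hug : ∀ m ≤ D, G.dist u (g.getVert m) = G.dist u w + m := fun m hm => by
    have hwg := (g.dist_getVert_of_length_eq_dist hg (hg ▸ hm)).1
    have := hσg m hm
    have := hG.dist_triangle (u := u) (v := w) (w := g.getVert m)
    have := hG.dist_triangle (u := u) (v := g.getVert m) (w := σ)
    have : G.dist (g.getVert m) σ = G.dist σ (g.getVert m) := dist_comm
    omega
  have hadj : ∀ m < D, G.Adj (g.getVert (m + 1)) (g.getVert m) := fun m hm =>
    (g.adj_getVert_succ (by omega)).symm
  have hg0 : g.getVert 0 = w := g.getVert_zero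
  have hgD : g.getVert D = σ := hg ▸ g.getVert_length
  -- the last step of the geodesic that leaves `y`-level `b`
  obtain ⟨s₂, -, hs₂D, hys₂, hys₂'⟩ := Nat.exists_le_lt_and_not_succ
    (P := fun m => G.dist y (g.getVert m) ≤ b) (Nat.zero_le D) (by simp [hg0, hyw])
    (by simp [hgD, hyσ])
  have := (hadj s₂ hs₂D).diff_dist_adj (u := y)
  have hD : D ≤ s₂ + 1 + i := by
    have := hα.dist_add_dist_le_of_adj (hadj s₂ hs₂D) (u := σ) (x := y)
      (by rw [hσg _ hs₂D.le, hσg _ hs₂D]; omega) (by omega)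
    rw [hσg _ hs₂D, dist_comm (u := σ), hyσ] at this
    omega
  -- a later step that leaves `x`-level `a` towards `x`
  obtain ⟨s, hs₂s, hsD, hxs, hxs'⟩ := Nat.exists_le_lt_and_not_succ
    (P := fun m => a ≤ G.dist x (g.getVert m)) hs₂D.le
    (by
      have := hG.dist_triangle (u := x) (v := g.getVert s₂) (w := y)
      have : G.dist (g.getVert s₂) y = G.dist y (g.getVert s₂) := dist_comm
      omega)
    (by rw [hgD]; omega)
  have := (hadj s hsD).diff_dist_adj (u := x)
  have := hα.dist_add_dist_le_of_adj (hadj s hsD) (u := x) (x := u)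
    (by omega) (by rw [hug _ hsD, hug _ hsD.le]; omega)
  rw [hug _ hsD, dist_comm (u := x) (v := u)] at this
  omega

theorem dist_add_le_or_of_same_levels (hG : G.Connected) (hα : AlphaI G i) {x y u w c σ : V}
    {a b : ℕ} (hxy : G.dist x y = a + b) (hxc : G.dist x c = a) (hyc : G.dist y c = b)
    (hxw : G.dist x w = a) (hyw : G.dist y w = b) (hwc : G.dist u w + G.dist w c = G.dist u c)
    (hcσ : G.Adj c σ) (hxσ : G.dist x σ + 1 = a)
    (hw : G.dist u w + a ≤ G.dist u x + i ∨ G.dist u w + b ≤ G.dist u y + i) :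
    G.dist u c + a ≤ G.dist u x + 2 * i + 1 ∨ G.dist u c + b ≤ G.dist u y + 2 * i + 1 := by
  have hyσ : G.dist y σ = b + 1 := by
    have := hcσ.diff_dist_adj (u := y)
    have := hG.dist_triangle (u := x) (v := σ) (w := y)
    have : G.dist σ y = G.dist y σ := dist_comm
    omega
  have huσ := hcσ.diff_dist_adj (u := u)
  by_cases hσ : G.dist u c = G.dist u σ + 1
  · right
    have := hα.dist_add_dist_le_of_adj hcσ.symm hσ (x := y) (by omega)
    omega
  have hwσ := hcσ.diff_dist_adj (u := w)
  have := hG.dist_triangle (u := u) (v := w) (w := σ)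
  rcases hwσ with hwσ | hwσ | hwσ
  · left
    have := hα.dist_add_le_of_geodesic_crossing_levels hG hxy hxw hyw (u := u) (by omega) hyσ
      (by omega)
    omega
  · -- `c` lies between `w` and `σ`, which confines `w` to the `i`-ball around `c`
    have := hα.dist_add_dist_le_of_adj hcσ hwσ (x := x) (by omega)
    rw [SimpleGraph.dist_comm (u := w) (v := x)] at this
    omega
  · omega

theorem exists_same_levels_mem_interval (hG : G.Connected) (hα : AlphaI G i) {x y c : V}
    (hc : Itv G x y c) (u : V) :
    ∃ w, G.dist u w + G.dist w c = G.dist u c ∧ G.dist x w = G.dist x c ∧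
      G.dist y w = G.dist y c ∧
      (G.dist u w + G.dist x c ≤ G.dist u x + i ∨ G.dist u w + G.dist y c ≤ G.dist u y + i) := by
  by_cases hu : G.dist x u = G.dist x c ∧ G.dist y u = G.dist y c
  · refine ⟨u, by simp, hu.1, hu.2, Or.inl ?_⟩
    rw [dist_self, SimpleGraph.dist_comm (u := u), ← hu.1]
    omega
  obtain ⟨q, hq⟩ := hG.exists_walk_length_eq_dist u c
  have hqu := fun m (hm : m ≤ q.length) => (q.dist_getVert_of_length_eq_dist hq hm)
  obtain ⟨m, -, hmL, hzm, hwm⟩ := Nat.exists_le_lt_and_not_succ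
    (P := fun m => ¬ (G.dist x (q.getVert m) = G.dist x c ∧
      G.dist y (q.getVert m) = G.dist y c)) (Nat.zero_le q.length)
    (by simpa only [q.getVert_zero] using hu) (by simp [q.getVert_length])
  rw [not_not] at hwm
  set z := q.getVert m
  set w := q.getVert (m + 1)
  have hzw : G.Adj z w := q.adj_getVert_succ hmL
  have hudist : G.dist u w = G.dist u z + 1 := by
    rw [(hqu m hmL.le).1, (hqu (m + 1) hmL).1]
  refine ⟨w, by rw [(hqu _ hmL).1, (hqu _ hmL).2]; omega, hwm.1, hwm.2, ?_⟩
  have hxz := hzw.diff_dist_adj (u := x)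
  have hyz := hzw.diff_dist_adj (u := y)
  have := hG.dist_triangle (u := x) (v := z) (w := y)
  have : G.dist z y = G.dist y z := dist_comm
  have : G.dist x c + G.dist c y = G.dist x y := hc
  have : G.dist c y = G.dist y c := dist_comm
  -- a neighbour of `w` off the levels of `c` is one step further from `x` or from `y`
  by_cases hxz' : G.dist x z = G.dist x w + 1
  · left
    have := hα.dist_add_dist_le_of_adj hzw hudist hxz'
    omega
  · right
    have := hα.dist_add_dist_le_of_adj hzw hudist (x := y) (by omega)
    omega

theorem dist_add_le_or (hG : G.Connected) (hα : AlphaI G i) {x y c : V} (hc : Itv G x y c)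
    (u : V) :
    G.dist u c + G.dist x c ≤ G.dist u x + 2 * i + 1 ∨
      G.dist u c + G.dist y c ≤ G.dist u y + 2 * i + 1 := by
  by_cases hxc : G.dist x c = 0
  · left
    rw [hG.dist_eq_zero_iff.mp hxc, dist_self]
    omega
  obtain ⟨p, hp⟩ := hG.exists_walk_length_eq_dist c x
  have hσ := p.dist_getVert_of_length_eq_dist hp (n := 1)
    (by rw [hp, SimpleGraph.dist_comm]; omega)
  obtain ⟨w, hwc, hxw, hyw, hw⟩ := hα.exists_same_levels_mem_interval hG hc u
  have hxσ : G.dist x (p.getVert 1) + 1 = G.dist x c := by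
    rw [SimpleGraph.dist_comm, hσ.2, hp, SimpleGraph.dist_comm]
    omega
  refine hα.dist_add_le_or_of_same_levels hG (hc.symm.trans ?_) rfl rfl hxw hyw hwc
    (dist_eq_one_iff_adj.mp hσ.1) hxσ hw
  rw [SimpleGraph.dist_comm (u := c) (v := y)]

end AlphaI

theorem stmt_13 [Fintype V] (G : SimpleGraph V) (hG : G.Connected) (i : ℕ)
    (hα : AlphaI G i) (x y c : V)
    (hx : ecc G x = G.dist x y) (hy : ecc G y = G.dist x y)
    (hc : Itv G x y c) (hmid : min (G.dist x c) (G.dist y c) = G.dist x y / 2)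
    (T : SimpleGraph V) (hT : T.IsTree) (hTsub : T ≤ G)
    (hBFS : ∀ v : V, T.dist c v = G.dist c v) (v : V) :
    ecc G v ≤ ecc T v ∧ ecc T v ≤ ecc G v + 4 * i + 3 := by
  refine ⟨Finset.sup_mono_fun fun u _ => (hT.connected.preconnected v u).dist_anti hTsub,
    Finset.sup_le fun u _ => ?_⟩
  have hvu : T.dist v u ≤ G.dist v c + G.dist u c := by
    have := hT.connected.dist_triangle (u := v) (v := c) (w := u)
    rwa [SimpleGraph.dist_comm (u := v) (v := c), hBFS, hBFS, SimpleGraph.dist_comm (u := c),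
      SimpleGraph.dist_comm (u := c)] at this
  have hxy : G.dist x c + G.dist y c = G.dist x y := by
    rw [← hc, SimpleGraph.dist_comm (u := c) (v := y)]
  have hux : G.dist u x ≤ G.dist x y := SimpleGraph.dist_comm (G := G) ▸ hx ▸ dist_le_ecc G x u
  have huy : G.dist u y ≤ G.dist x y := SimpleGraph.dist_comm (G := G) ▸ hy ▸ dist_le_ecc G y u
  have hvx := dist_le_ecc G v x
  have hvy := dist_le_ecc G v y
  have hv := hα.dist_add_le_or hG hc v
  have hu := hα.dist_add_le_or hG hc u
  omega
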